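/- Let c : ℝⁿ → ℝ be continuously differentiable with the property |c(x') - c(x) - ⟨∇c(x), x' - x⟩| ≤ (H/2)‖x' - x‖² for all x, x'. Then for any x, d ∈ ℝⁿ and α ∈ [0,1], |c(x + αd)| ≤ (1-α)|c(x)| + α|c(x) + ⟨∇c(x), d⟩| + (α²H/2)‖d‖². -/

import Mathlib

/-!
Write `y = x + α • d`. The quadratic bound at the pair `(x, y)` shows that `c y` is within
`(H / 2) α² ‖d‖²` of the linearization `c x + α ⟪∇c x, d⟫`, and this linearization is the convex
combination `(1 - α) c x + α (c x + ⟪∇c x, d⟫)`, whose absolute value is at most the same convex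
combination of absolute values.
-/

open RealInnerProductSpace

lemma abs_convex_combination_le {a b α : ℝ} (h₀ : 0 ≤ α) (h₁ : α ≤ 1) :
    |(1 - α) * a + α * b| ≤ (1 - α) * |a| + α * |b| :=
  convexOn_univ_norm.2 (Set.mem_univ a) (Set.mem_univ b) (sub_nonneg.2 h₁) h₀ (by ring)

lemma abs_le_of_abs_sub_linearization_le {E : Type*} [NormedAddCommGroup E]
    [InnerProductSpace ℝ E] {c : E → ℝ} {g x d : E} {H α : ℝ} (h₀ : 0 ≤ α) (h₁ : α ≤ 1)
    (hquad : |c (x + α • d) - c x - ⟪g, x + α • d - x⟫| ≤ H / 2 * ‖x + α • d - x‖ ^ 2) :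
    |c (x + α • d)| ≤ (1 - α) * |c x| + α * |c x + ⟪g, d⟫| + α ^ 2 * H / 2 * ‖d‖ ^ 2 := by
  rw [add_sub_cancel_left, inner_smul_right, norm_smul, Real.norm_eq_abs, mul_pow, sq_abs]
    at hquad
  have hlin : c x + α * ⟪g, d⟫ = (1 - α) * c x + α * (c x + ⟪g, d⟫) := by ring
  have hconv := abs_convex_combination_le (a := c x) (b := c x + ⟪g, d⟫) h₀ h₁
  rw [← hlin] at hconv
  have htri := abs_sub_abs_le_abs_sub (c (x + α • d)) (c x + α * ⟪g, d⟫)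
  rw [← sub_sub] at htri
  linarith

theorem stmt_1_general {n : ℕ} (c : EuclideanSpace ℝ (Fin n) → ℝ) (H : ℝ)
    (hquad : ∀ x x' : EuclideanSpace ℝ (Fin n),
      |c x' - c x - ⟪gradient c x, x' - x⟫| ≤ H / 2 * ‖x' - x‖ ^ 2)
    (x d : EuclideanSpace ℝ (Fin n)) (α : ℝ) (hα : α ∈ Set.Icc (0 : ℝ) 1) :
    |c (x + α • d)| ≤ (1 - α) * |c x| + α * |c x + ⟪gradient c x, d⟫|
      + α ^ 2 * H / 2 * ‖d‖ ^ 2 :=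
  abs_le_of_abs_sub_linearization_le hα.1 hα.2 (hquad x (x + α • d))

theorem stmt_1 {n : ℕ} (c : EuclideanSpace ℝ (Fin n) → ℝ) (H : ℝ) (hH : 0 ≤ H)
    (hdiff : Differentiable ℝ c)
    (hquad : ∀ x x' : EuclideanSpace ℝ (Fin n),
      |c x' - c x - ⟪gradient c x, x' - x⟫| ≤ H / 2 * ‖x' - x‖ ^ 2)
    (x d : EuclideanSpace ℝ (Fin n)) (α : ℝ) (hα : α ∈ Set.Icc (0 : ℝ) 1) :
    |c (x + α • d)| ≤ (1 - α) * |c x| + α * |c x + ⟪gradient c x, d⟫|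
      + α ^ 2 * H / 2 * ‖d‖ ^ 2 :=
  stmt_1_general c H hquad x d α hα
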